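/- For every integer n ≥ 1 and every integer l with 0 ≤ l ≤ 2^n − 1, one has 0 ≤ −Σ^l_n ≤ 2^{(n−1)(n−2)/2} (equivalently, 0 ≤ a(n,l) ≤ 2^{(n−1)(n−2)/2}, where a(n,l) := −Σ^l_n). -/

import Mathlib

/-- The ±1 Thue–Morse sequence: `u n = (-1)^(s₂(n)+1)` where `s₂` is the binary digit sum. -/
def u (n : ℕ) : ℤ := (-1) ^ ((Nat.digits 2 n).sum + 1)

/-- The "Pascal triangle" associated to the Thue–Morse sequence:
`Sig k n` is `Σ^k_n` (k the superscript, n the subscript). -/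
def Sig : ℕ → ℕ → ℤ
  | k, 0 => u k
  | 0, _ + 1 => 0
  | k + 1, n + 1 => Sig k n + Sig k (n + 1)

/-!
Write `F_n = ∑_k Σ^k_n X^k`. The recursion says `(1 - X) F_{n+1} = X F_n`, and the Thue–Morse
relations `u_{2k} = u_k`, `u_{2k+1} = -u_k` say `F_0(X) = (1 - X) F_0(X²)`. Eliminating `F_0`
gives `X^s F_{s+2}(X) = (1 + X)^s · (1 + X) F_{s+1}(X²)`: each `-Σ^k_{s+2}` is a combination of
values `-Σ^m_{s+1}` with `m ≤ (k + s) / 2`, with nonnegative binomial weights of total at most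
`2^s`. Starting from `Σ^k_1 ∈ {0, -1}` for `k ≤ 2`, induction on the level gives
`0 ≤ -Σ^k_{s+1} ≤ 2^(0 + 1 + ⋯ + (s - 1))` for all `k ≤ 2^(s+1) + s`.
-/

open PowerSeries Finset

lemma u_two_mul (t : ℕ) : u (2 * t) = u t := by
  rcases Nat.eq_zero_or_pos t with rfl | ht
  · rfl
  · rw [u, Nat.digits_def' (by norm_num) (by omega)]
    simp [Nat.mul_div_cancel_left t two_pos, u]

lemma u_two_mul_add_one (t : ℕ) : u (2 * t + 1) = -u t := by
  rw [u, Nat.digits_def' (by norm_num) (by omega), u]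
  simp only [Nat.mul_add_mod, Nat.mul_add_div two_pos, List.sum_cons]
  norm_num [pow_succ, add_comm 1]

lemma pow_mul_eq_pow_mul_of_forall_mul_succ {M : Type*} [CommMonoid M] {a b : M} {x : ℕ → M}
    (h : ∀ n, a * x (n + 1) = b * x n) (n : ℕ) : a ^ n * x n = b ^ n * x 0 := by
  induction n with
  | zero => simp
  | succ n ih =>
    calc a ^ (n + 1) * x (n + 1) = a ^ n * (a * x (n + 1)) := by rw [pow_succ, mul_assoc]
      _ = b * (a ^ n * x n) := by rw [h]; exact mul_left_comm _ _ _
      _ = b ^ (n + 1) * x 0 := by rw [ih, pow_succ', mul_assoc]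

lemma coeff_one_add_X_pow {R : Type*} [Semiring R] (n k : ℕ) :
    coeff k ((1 + X : R⟦X⟧) ^ n) = n.choose k := by
  rw [← Polynomial.coe_X, ← Polynomial.coe_one, ← Polynomial.coe_add, ← Polynomial.coe_pow,
    Polynomial.coeff_coe, Polynomial.coeff_one_add_X_pow]

lemma sum_antidiagonal_choose_fst_le (n N : ℕ) : ∑ p ∈ antidiagonal N, n.choose p.1 ≤ 2 ^ n := by
  rw [Nat.sum_antidiagonal_eq_sum_range_succ_mk, ← Nat.sum_range_choose]
  exact sum_le_sum_of_ne_zero fun i _ hi => mem_range.2 <|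
    Nat.lt_succ_of_le (not_lt.1 fun h => hi (Nat.choose_eq_zero_of_lt h))

def sigSeries (n : ℕ) : ℤ⟦X⟧ := mk fun k => Sig k n

/-- `(1 + X) · (sigSeries n)(X²)` -/
def sigSeriesDoubled (n : ℕ) : ℤ⟦X⟧ := mk fun k => Sig (k / 2) n

lemma one_sub_X_mul_sigSeries_succ (n : ℕ) :
    (1 - X) * sigSeries (n + 1) = X * sigSeries n := by
  ext (_ | k)
  · simp [sigSeries, Sig]
  · simp [sub_mul, coeff_succ_X_mul, sigSeries, Sig]

lemma one_sub_X_sq_mul_sigSeriesDoubled_succ (n : ℕ) :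
    (1 - X ^ 2) * sigSeriesDoubled (n + 1) = X ^ 2 * sigSeriesDoubled n := by
  ext (_ | _ | k)
  · simp [sigSeriesDoubled, Sig]
  · simp [sub_mul, coeff_X_pow_mul', sigSeriesDoubled, Sig]
  · have : (k + 2) / 2 = k / 2 + 1 := by omega
    simp [sub_mul, coeff_X_pow_mul', sigSeriesDoubled, Sig, this]

lemma one_add_X_mul_sigSeries_zero :
    (1 + X) * sigSeries 0 = (1 - X) * sigSeriesDoubled 0 := by
  ext (_ | k)
  · simp [sigSeries, sigSeriesDoubled, Sig]
  · simp only [add_mul, sub_mul, one_mul, map_add, map_sub, coeff_succ_X_mul, sigSeries,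
      sigSeriesDoubled, coeff_mk, Sig]
    obtain ⟨t, rfl | rfl⟩ := Nat.even_or_odd' k
    · rw [show (2 * t + 1) / 2 = t by omega, Nat.mul_div_cancel_left t two_pos,
        u_two_mul_add_one, u_two_mul]
      ring
    · rw [show 2 * t + 1 + 1 = 2 * (t + 1) by ring, show (2 * t + 1) / 2 = t by omega,
        Nat.mul_div_cancel_left _ two_pos, u_two_mul, u_two_mul_add_one]
      ring

lemma one_sub_X_ne_zero {R : Type*} [Ring R] [Nontrivial R] : (1 - X : R⟦X⟧) ≠ 0 :=
  fun h => by simpa using congrArg constantCoeff h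

lemma one_add_X_ne_zero {R : Type*} [Semiring R] [Nontrivial R] : (1 + X : R⟦X⟧) ≠ 0 :=
  fun h => by simpa using congrArg constantCoeff h

theorem X_pow_mul_sigSeries_add_two (s : ℕ) :
    X ^ s * sigSeries (s + 2) = (1 + X) ^ s * sigSeriesDoubled (s + 1) := by
  have hF := pow_mul_eq_pow_mul_of_forall_mul_succ one_sub_X_mul_sigSeries_succ (s + 2)
  have hD := pow_mul_eq_pow_mul_of_forall_mul_succ one_sub_X_sq_mul_sigSeriesDoubled_succ (s + 1)
  rw [show (1 - X ^ 2 : ℤ⟦X⟧) = (1 - X) * (1 + X) by ring, mul_pow] at hD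
  refine X_pow_mul_cancel (k := s + 2) (mul_left_cancel₀
    (mul_ne_zero (pow_ne_zero (s + 2) one_sub_X_ne_zero) one_add_X_ne_zero) ?_)
  linear_combination (X ^ (2 * s + 2) * (1 + X)) * hF
    + X ^ (3 * s + 4) * one_add_X_mul_sigSeries_zero - ((1 - X) * X ^ (s + 2)) * hD

theorem Sig_add_two_eq_sum (s k : ℕ) :
    Sig k (s + 2) = ∑ p ∈ antidiagonal (k + s), (s.choose p.1 : ℤ) * Sig (p.2 / 2) (s + 1) := by
  have h := congrArg (coeff (k + s)) (X_pow_mul_sigSeries_add_two s)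
  rw [coeff_X_pow_mul, coeff_mul] at h
  simpa [coeff_one_add_X_pow, sigSeries, sigSeriesDoubled] using h

theorem neg_Sig_add_two_mem_Icc {s : ℕ} {B : ℤ}
    (h : ∀ m ≤ 2 ^ (s + 1) + s, -Sig m (s + 1) ∈ Set.Icc 0 B) {k : ℕ}
    (hk : k ≤ 2 ^ (s + 2) + (s + 1)) : -Sig k (s + 2) ∈ Set.Icc 0 (2 ^ s * B) := by
  have hterm : ∀ p ∈ antidiagonal (k + s), -Sig (p.2 / 2) (s + 1) ∈ Set.Icc 0 B := by
    intro p hp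
    rw [HasAntidiagonal.mem_antidiagonal] at hp
    exact h _ (by rw [pow_succ] at hk; omega)
  have hB : 0 ≤ B := Set.nonempty_Icc.1 ⟨_, h 0 (Nat.zero_le _)⟩
  rw [Sig_add_two_eq_sum, ← sum_neg_distrib]
  simp_rw [← mul_neg]
  constructor
  · exact sum_nonneg fun p hp => mul_nonneg (Nat.cast_nonneg _) (hterm p hp).1
  · calc ∑ p ∈ antidiagonal (k + s), (s.choose p.1 : ℤ) * -Sig (p.2 / 2) (s + 1)
        ≤ ∑ p ∈ antidiagonal (k + s), (s.choose p.1 : ℤ) * B :=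
          sum_le_sum fun p hp => mul_le_mul_of_nonneg_left (hterm p hp).2 (Nat.cast_nonneg _)
      _ = (∑ p ∈ antidiagonal (k + s), (s.choose p.1 : ℤ)) * B := by rw [sum_mul]
      _ ≤ 2 ^ s * B := mul_le_mul_of_nonneg_right
          (by exact_mod_cast sum_antidiagonal_choose_fst_le s (k + s)) hB

theorem neg_Sig_mem_Icc (s k : ℕ) (hk : k ≤ 2 ^ (s + 1) + s) :
    -Sig k (s + 1) ∈ Set.Icc 0 (2 ^ (s * (s - 1) / 2)) := by
  induction s generalizing k with
  | zero => interval_cases k <;> simp [Sig, u]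
  | succ s ih =>
    rw [Nat.triangle_succ, pow_add, mul_comm]
    exact neg_Sig_add_two_mem_Icc ih hk

theorem sig_bounds (n : ℕ) (hn : 1 ≤ n) (l : ℕ) (hl : l ≤ 2 ^ n - 1) :
    0 ≤ -Sig l n ∧ -Sig l n ≤ 2 ^ ((n - 1) * (n - 2) / 2) := by
  obtain ⟨s, rfl⟩ : ∃ s, n = s + 1 := ⟨n - 1, by omega⟩
  simpa using neg_Sig_mem_Icc s l ((hl.trans (Nat.sub_le _ _)).trans (Nat.le_add_right _ _))
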